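/- arXiv:1501.06866 — 3 statements merged into one kernel-verified Lean document; each statement's English description precedes it below -/
import Mathlib

section
/- For natural numbers k, l, m ≥ 1, the product B(k)·B(l)·B(m) equals B'(k,l,m)·B'', where B'' is the constant matrix [[2,1,1],[1,1,0],[1,1,1]] and B'(k,l,m) = [[k(l-1)+1, k(l(m-1)+m), 2k-1],[l-1, l(m-1)+1, 1],[0, m-1, 1]]. -/
open Matrix

/-- The matrix `B(k)` from the paper. -/
def Bmat (k : ℕ) : Matrix (Fin 3) (Fin 3) ℤ := !![(k : ℤ), (k : ℤ), 1; 1, 0, 0; 0, 1, 0]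

/-- The matrix `B'(k,l,m)` from the paper. -/
def Bp (k l m : ℕ) : Matrix (Fin 3) (Fin 3) ℤ :=
  !![(k : ℤ) * ((l : ℤ) - 1) + 1, (k : ℤ) * ((l : ℤ) * ((m : ℤ) - 1) + (m : ℤ)), 2 * (k : ℤ) - 1;
     (l : ℤ) - 1, (l : ℤ) * ((m : ℤ) - 1) + 1, 1;
     0, (m : ℤ) - 1, 1]

/-- The constant matrix `B''`. -/
def Bpp : Matrix (Fin 3) (Fin 3) ℤ := !![2, 1, 1; 1, 1, 0; 1, 1, 1]

theorem stmt0_general (k l m : ℕ) :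
    Bmat k * Bmat l * Bmat m = Bp k l m * Bpp := by
  simp only [Bmat, Bp, Bpp, mul_fin_three]
  ring_nf

theorem stmt0 (k l m : ℕ) (hk : 1 ≤ k) (hl : 1 ≤ l) (hm : 1 ≤ m) :
    Bmat k * Bmat l * Bmat m = Bp k l m * Bpp :=
  stmt0_general k l m
end

section
/- If (kᵢ) is a sequence of positive naturals and the row vectors ℓᵢ ∈ ℝ⁴ are defined by ℓ₀ = (1,1,1,1) and ℓᵢ₊₁ = ℓᵢ·A(kᵢ), then every coordinate of ℓᵢ tends to infinity as i → ∞. -/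
open Matrix Filter

/-- The matrix `A(k)` from the paper. -/
def Amat (k : ℕ) : Matrix (Fin 4) (Fin 4) ℝ :=
  !![0, 0, 1, (k : ℝ); 1, 0, 0, 0; 0, 1, 0, 0; 0, 1, 1, (k : ℝ) - 1]

set_option maxHeartbeats 2000000 in
theorem stmt8 (k : ℕ → ℕ) (hk : ∀ i, 1 ≤ k i)
    (l : ℕ → Fin 4 → ℝ) (hl0 : l 0 = fun _ => 1)
    (hl : ∀ i, l (i + 1) = Matrix.vecMul (l i) (Amat (k i))) :
    ∀ j, Tendsto (fun i => l i j) atTop atTop := by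
  have hkR : ∀ i, (1:ℝ) ≤ (k i : ℝ) := fun i => by exact_mod_cast hk i
  have h0 : ∀ i, l (i+1) 0 = l i 1 := by
    intro i
    simp [hl, Amat, vecMul, dotProduct, Fin.sum_univ_four, Matrix.vecHead, Matrix.vecTail]
  have h1 : ∀ i, l (i+1) 1 = l i 2 + l i 3 := by
    intro i
    simp [hl, Amat, vecMul, dotProduct, Fin.sum_univ_four, Matrix.vecHead, Matrix.vecTail]
  have h2 : ∀ i, l (i+1) 2 = l i 0 + l i 3 := by
    intro i
    simp [hl, Amat, vecMul, dotProduct, Fin.sum_univ_four, Matrix.vecHead, Matrix.vecTail]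
  have h3 : ∀ i, l (i+1) 3 = (k i : ℝ) * l i 0 + ((k i : ℝ) - 1) * l i 3 := by
    intro i
    simp [hl, Amat, vecMul, dotProduct, Fin.sum_univ_four, Matrix.vecHead, Matrix.vecTail]
    ring
  have hdouble : ∀ i (c : ℝ), 0 ≤ c → (∀ j, c ≤ l i j) → ∀ j, 2*c ≤ l (i+3) j := by
    intro i c hc hb
    have ha := hb 0; have hb1 := hb 1; have hb2 := hb 2; have hb3 := hb 3
    have k1 := hkR i; have k2 := hkR (i+1); have k3 := hkR (i+2)
    have e10 := h0 i; have e11 := h1 i; have e12 := h2 i; have e13 := h3 i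
    have e20 := h0 (i+1); have e21 := h1 (i+1); have e22 := h2 (i+1); have e23 := h3 (i+1)
    have e30 := h0 (i+2); have e31 := h1 (i+2); have e32 := h2 (i+2); have e33 := h3 (i+2)
    have he : i + 2 + 1 = i + 3 := by omega
    rw [he] at e30 e31 e32 e33
    have hp0 : c ≤ l (i+1) 0 := by rw [e10]; linarith
    have hp1 : 2*c ≤ l (i+1) 1 := by rw [e11]; linarith
    have hp2 : 2*c ≤ l (i+1) 2 := by rw [e12]; linarith
    have hp3 : c ≤ l (i+1) 3 := by rw [e13]; nlinarith
    have hq0 : 2*c ≤ l (i+2) 0 := by rw [e20]; linarith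
    have hq1 : 3*c ≤ l (i+2) 1 := by rw [e21]; linarith
    have hq2 : 2*c ≤ l (i+2) 2 := by rw [e22]; linarith
    have hq3 : c ≤ l (i+2) 3 := by rw [e23]; nlinarith
    have q0 : 2*c ≤ l (i+3) 0 := by rw [e30]; linarith
    have q1 : 2*c ≤ l (i+3) 1 := by rw [e31]; linarith
    have q2 : 2*c ≤ l (i+3) 2 := by rw [e32]; linarith
    have q3 : 2*c ≤ l (i+3) 3 := by rw [e33]; nlinarith
    intro j; fin_cases j <;> assumption
  have hbase0 : ∀ j, (1:ℝ) ≤ l 0 j := by intro j; simp [hl0]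
  have hbase1 : ∀ j, (1:ℝ) ≤ l 1 j := by
    have k1 := hkR 0
    have b0 : (1:ℝ) ≤ l 1 0 := by rw [show (1:ℕ) = 0+1 from rfl, h0]; simp [hl0]
    have b1 : (1:ℝ) ≤ l 1 1 := by rw [show (1:ℕ) = 0+1 from rfl, h1]; simp [hl0]
    have b2 : (1:ℝ) ≤ l 1 2 := by rw [show (1:ℕ) = 0+1 from rfl, h2]; simp [hl0]
    have b3 : (1:ℝ) ≤ l 1 3 := by rw [show (1:ℕ) = 0+1 from rfl, h3]; simp [hl0]; nlinarith
    intro j; fin_cases j <;> assumption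
  have hbase2 : ∀ j, (1:ℝ) ≤ l 2 j := by
    have k2 := hkR 1
    have b0 := hbase1 0; have b1 := hbase1 1; have b2 := hbase1 2; have b3 := hbase1 3
    have c0 : (1:ℝ) ≤ l 2 0 := by rw [show (2:ℕ) = 1+1 from rfl, h0]; linarith
    have c1 : (1:ℝ) ≤ l 2 1 := by rw [show (2:ℕ) = 1+1 from rfl, h1]; linarith
    have c2 : (1:ℝ) ≤ l 2 2 := by rw [show (2:ℕ) = 1+1 from rfl, h2]; linarith
    have c3 : (1:ℝ) ≤ l 2 3 := by rw [show (2:ℕ) = 1+1 from rfl, h3]; nlinarith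
    intro j; fin_cases j <;> assumption
  have key : ∀ n, (∀ j, (2:ℝ)^(n/3) ≤ l n j) ∧ (∀ j, (2:ℝ)^((n+1)/3) ≤ l (n+1) j)
      ∧ (∀ j, (2:ℝ)^((n+2)/3) ≤ l (n+2) j) := by
    intro n
    induction n with
    | zero => exact ⟨by simpa using hbase0, by simpa using hbase1, by simpa using hbase2⟩
    | succ m ih =>
      refine ⟨ih.2.1, ih.2.2, ?_⟩
      have hd := hdouble m ((2:ℝ)^(m/3)) (by positivity) ih.1
      have hdiv : (m+1+2)/3 = m/3 + 1 := by omega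
      rw [hdiv, pow_succ]
      intro j
      have h := hd j
      rw [show m + 3 = m + 1 + 2 from by omega] at h
      linarith
  have hmin : ∀ n j, (2:ℝ)^(n/3) ≤ l n j := fun n => (key n).1
  intro j
  have htend : Tendsto (fun n : ℕ => (2:ℝ)^(n/3)) atTop atTop := by
    apply (tendsto_pow_atTop_atTop_of_one_lt (by norm_num : (1:ℝ) < 2)).comp
    exact tendsto_atTop_atTop.2 (fun b => ⟨3*b, fun n hn => by omega⟩)
  exact tendsto_atTop_mono (fun n => hmin n j) htend
end

section
/- Let (kᵢ) be positive naturals with ∑ 1/kᵢ < ∞. Then the limit R̃ = lim_{i→∞} (R(k₀)/k₀)·(R(k₁)/k₁)···(R(k_{2i−1})/k_{2i−1}) exists (entrywise) and satisfies R̃·(R')² = R̃. -/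
open Matrix Filter

/-- The 9×9 matrix `R(k)` from the paper. -/
def Rmat (k : ℕ) : Matrix (Fin 9) (Fin 9) ℝ :=
  !![0, (k:ℝ)-1, (k:ℝ)-1, 0, 0, 0, (k:ℝ), (k:ℝ)-1, (k:ℝ)-1;
     0, 0, 0, 0, 0, 0, 0, 1, 0;
     0, 1, 0, 0, 0, 0, 0, 0, 1;
     0, 0, 1, 0, 0, 0, 1, 0, 0;
     1, 1, 1, 1, 0, 0, 0, 0, 0;
     0, (k:ℝ), (k:ℝ), 0, 0, 0, (k:ℝ), (k:ℝ)-1, (k:ℝ)-1;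
     0, 0, 0, 0, 1, 0, 0, 0, 0;
     0, 1, 1, 0, 0, 1, 0, 0, 0;
     (k:ℝ)-1, (k:ℝ)-1, (k:ℝ)-1, (k:ℝ), 0, 0, 0, (k:ℝ)-1, 0]

/-- The matrix R', the coefficient of k in R(k) = kR' + R''. -/
def Rprime : Matrix (Fin 9) (Fin 9) ℝ :=
  !![0, 1, 1, 0, 0, 0, 1, 1, 1;
     0, 0, 0, 0, 0, 0, 0, 0, 0;
     0, 0, 0, 0, 0, 0, 0, 0, 0;
     0, 0, 0, 0, 0, 0, 0, 0, 0;
     0, 0, 0, 0, 0, 0, 0, 0, 0;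
     0, 1, 1, 0, 0, 0, 1, 1, 1;
     0, 0, 0, 0, 0, 0, 0, 0, 0;
     0, 0, 0, 0, 0, 0, 0, 0, 0;
     1, 1, 1, 1, 0, 0, 0, 1, 0]

/-- The partial products (R(k₀)/k₀)·(R(k₁)/k₁)···(R(k_{n−1})/k_{n−1}). -/
noncomputable def partialProd (k : ℕ → ℕ) : ℕ → Matrix (Fin 9) (Fin 9) ℝ
  | 0 => 1
  | n + 1 => partialProd k n * (((k n : ℝ))⁻¹ • Rmat (k n))

section VecEval
variable {α : Type*}
lemma vhead_const {n : ℕ} (c : α) : vecHead (fun _ : Fin (n+1) => c) = c := rfl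
lemma vtail_const {n : ℕ} (c : α) : vecTail (fun _ : Fin (n+1) => c) = fun _ : Fin n => c := rfl
lemma cv_1_0 (x : α) (u : Fin 0 → α) : vecCons x u (0 : Fin 1) = x := rfl
lemma cv_2_0 (x : α) (u : Fin 1 → α) : vecCons x u (0 : Fin 2) = x := rfl
lemma cv_2_1 (x : α) (u : Fin 1 → α) : vecCons x u (1 : Fin 2) = u (0 : Fin 1) := rfl
lemma cv_3_0 (x : α) (u : Fin 2 → α) : vecCons x u (0 : Fin 3) = x := rfl
lemma cv_3_1 (x : α) (u : Fin 2 → α) : vecCons x u (1 : Fin 3) = u (0 : Fin 2) := rfl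
lemma cv_3_2 (x : α) (u : Fin 2 → α) : vecCons x u (2 : Fin 3) = u (1 : Fin 2) := rfl
lemma cv_4_0 (x : α) (u : Fin 3 → α) : vecCons x u (0 : Fin 4) = x := rfl
lemma cv_4_1 (x : α) (u : Fin 3 → α) : vecCons x u (1 : Fin 4) = u (0 : Fin 3) := rfl
lemma cv_4_2 (x : α) (u : Fin 3 → α) : vecCons x u (2 : Fin 4) = u (1 : Fin 3) := rfl
lemma cv_4_3 (x : α) (u : Fin 3 → α) : vecCons x u (3 : Fin 4) = u (2 : Fin 3) := rfl
lemma cv_5_0 (x : α) (u : Fin 4 → α) : vecCons x u (0 : Fin 5) = x := rfl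
lemma cv_5_1 (x : α) (u : Fin 4 → α) : vecCons x u (1 : Fin 5) = u (0 : Fin 4) := rfl
lemma cv_5_2 (x : α) (u : Fin 4 → α) : vecCons x u (2 : Fin 5) = u (1 : Fin 4) := rfl
lemma cv_5_3 (x : α) (u : Fin 4 → α) : vecCons x u (3 : Fin 5) = u (2 : Fin 4) := rfl
lemma cv_5_4 (x : α) (u : Fin 4 → α) : vecCons x u (4 : Fin 5) = u (3 : Fin 4) := rfl
lemma cv_6_0 (x : α) (u : Fin 5 → α) : vecCons x u (0 : Fin 6) = x := rfl
lemma cv_6_1 (x : α) (u : Fin 5 → α) : vecCons x u (1 : Fin 6) = u (0 : Fin 5) := rfl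
lemma cv_6_2 (x : α) (u : Fin 5 → α) : vecCons x u (2 : Fin 6) = u (1 : Fin 5) := rfl
lemma cv_6_3 (x : α) (u : Fin 5 → α) : vecCons x u (3 : Fin 6) = u (2 : Fin 5) := rfl
lemma cv_6_4 (x : α) (u : Fin 5 → α) : vecCons x u (4 : Fin 6) = u (3 : Fin 5) := rfl
lemma cv_6_5 (x : α) (u : Fin 5 → α) : vecCons x u (5 : Fin 6) = u (4 : Fin 5) := rfl
lemma cv_7_0 (x : α) (u : Fin 6 → α) : vecCons x u (0 : Fin 7) = x := rfl
lemma cv_7_1 (x : α) (u : Fin 6 → α) : vecCons x u (1 : Fin 7) = u (0 : Fin 6) := rfl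
lemma cv_7_2 (x : α) (u : Fin 6 → α) : vecCons x u (2 : Fin 7) = u (1 : Fin 6) := rfl
lemma cv_7_3 (x : α) (u : Fin 6 → α) : vecCons x u (3 : Fin 7) = u (2 : Fin 6) := rfl
lemma cv_7_4 (x : α) (u : Fin 6 → α) : vecCons x u (4 : Fin 7) = u (3 : Fin 6) := rfl
lemma cv_7_5 (x : α) (u : Fin 6 → α) : vecCons x u (5 : Fin 7) = u (4 : Fin 6) := rfl
lemma cv_7_6 (x : α) (u : Fin 6 → α) : vecCons x u (6 : Fin 7) = u (5 : Fin 6) := rfl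
lemma cv_8_0 (x : α) (u : Fin 7 → α) : vecCons x u (0 : Fin 8) = x := rfl
lemma cv_8_1 (x : α) (u : Fin 7 → α) : vecCons x u (1 : Fin 8) = u (0 : Fin 7) := rfl
lemma cv_8_2 (x : α) (u : Fin 7 → α) : vecCons x u (2 : Fin 8) = u (1 : Fin 7) := rfl
lemma cv_8_3 (x : α) (u : Fin 7 → α) : vecCons x u (3 : Fin 8) = u (2 : Fin 7) := rfl
lemma cv_8_4 (x : α) (u : Fin 7 → α) : vecCons x u (4 : Fin 8) = u (3 : Fin 7) := rfl
lemma cv_8_5 (x : α) (u : Fin 7 → α) : vecCons x u (5 : Fin 8) = u (4 : Fin 7) := rfl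
lemma cv_8_6 (x : α) (u : Fin 7 → α) : vecCons x u (6 : Fin 8) = u (5 : Fin 7) := rfl
lemma cv_8_7 (x : α) (u : Fin 7 → α) : vecCons x u (7 : Fin 8) = u (6 : Fin 7) := rfl
lemma cv_9_0 (x : α) (u : Fin 8 → α) : vecCons x u (0 : Fin 9) = x := rfl
lemma cv_9_1 (x : α) (u : Fin 8 → α) : vecCons x u (1 : Fin 9) = u (0 : Fin 8) := rfl
lemma cv_9_2 (x : α) (u : Fin 8 → α) : vecCons x u (2 : Fin 9) = u (1 : Fin 8) := rfl
lemma cv_9_3 (x : α) (u : Fin 8 → α) : vecCons x u (3 : Fin 9) = u (2 : Fin 8) := rfl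
lemma cv_9_4 (x : α) (u : Fin 8 → α) : vecCons x u (4 : Fin 9) = u (3 : Fin 8) := rfl
lemma cv_9_5 (x : α) (u : Fin 8 → α) : vecCons x u (5 : Fin 9) = u (4 : Fin 8) := rfl
lemma cv_9_6 (x : α) (u : Fin 8 → α) : vecCons x u (6 : Fin 9) = u (5 : Fin 8) := rfl
lemma cv_9_7 (x : α) (u : Fin 8 → α) : vecCons x u (7 : Fin 9) = u (6 : Fin 8) := rfl
lemma cv_9_8 (x : α) (u : Fin 8 → α) : vecCons x u (8 : Fin 9) = u (7 : Fin 8) := rfl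
end VecEval

/-- The square of `Rprime`, computed explicitly. -/
def Qmat : Matrix (Fin 9) (Fin 9) ℝ :=
  !![1, 1, 1, 1, 0, 0, 0, 1, 0;
     0, 0, 0, 0, 0, 0, 0, 0, 0;
     0, 0, 0, 0, 0, 0, 0, 0, 0;
     0, 0, 0, 0, 0, 0, 0, 0, 0;
     0, 0, 0, 0, 0, 0, 0, 0, 0;
     1, 1, 1, 1, 0, 0, 0, 1, 0;
     0, 0, 0, 0, 0, 0, 0, 0, 0;
     0, 0, 0, 0, 0, 0, 0, 0, 0;
     0, 1, 1, 0, 0, 0, 1, 1, 1]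

set_option maxHeartbeats 2000000 in
lemma Rprime_sq : Rprime * Rprime = Qmat := by
  ext i l
  fin_cases i <;> fin_cases l <;>
    simp [Rprime, Qmat, Matrix.mul_apply, Fin.sum_univ_succ, vhead_const, vtail_const,
      cv_1_0, cv_2_0, cv_2_1, cv_3_0, cv_3_1, cv_3_2, cv_4_0, cv_4_1, cv_4_2, cv_4_3, cv_5_0, cv_5_1, cv_5_2, cv_5_3, cv_5_4, cv_6_0, cv_6_1, cv_6_2, cv_6_3, cv_6_4, cv_6_5, cv_7_0, cv_7_1, cv_7_2, cv_7_3, cv_7_4, cv_7_5, cv_7_6, cv_8_0, cv_8_1, cv_8_2, cv_8_3, cv_8_4, cv_8_5, cv_8_6, cv_8_7, cv_9_0, cv_9_1, cv_9_2, cv_9_3, cv_9_4, cv_9_5, cv_9_6, cv_9_7, cv_9_8]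

set_option maxHeartbeats 2000000 in
lemma Qmat_idem : Qmat * Qmat = Qmat := by
  ext i l
  fin_cases i <;> fin_cases l <;>
    simp [Qmat, Matrix.mul_apply, Fin.sum_univ_succ, vhead_const, vtail_const,
      cv_1_0, cv_2_0, cv_2_1, cv_3_0, cv_3_1, cv_3_2, cv_4_0, cv_4_1, cv_4_2, cv_4_3, cv_5_0, cv_5_1, cv_5_2, cv_5_3, cv_5_4, cv_6_0, cv_6_1, cv_6_2, cv_6_3, cv_6_4, cv_6_5, cv_7_0, cv_7_1, cv_7_2, cv_7_3, cv_7_4, cv_7_5, cv_7_6, cv_8_0, cv_8_1, cv_8_2, cv_8_3, cv_8_4, cv_8_5, cv_8_6, cv_8_7, cv_9_0, cv_9_1, cv_9_2, cv_9_3, cv_9_4, cv_9_5, cv_9_6, cv_9_7, cv_9_8]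

set_option maxHeartbeats 2000000 in
lemma Rmat_decomp (j : ℕ) : Rmat j = (j : ℝ) • Rprime + Rmat 0 := by
  ext i l
  fin_cases i <;> fin_cases l <;>
    simp [Rmat, Rprime, Matrix.add_apply, Matrix.smul_apply, vhead_const, vtail_const,
      cv_1_0, cv_2_0, cv_2_1, cv_3_0, cv_3_1, cv_3_2, cv_4_0, cv_4_1, cv_4_2, cv_4_3, cv_5_0, cv_5_1, cv_5_2, cv_5_3, cv_5_4, cv_6_0, cv_6_1, cv_6_2, cv_6_3, cv_6_4, cv_6_5, cv_7_0, cv_7_1, cv_7_2, cv_7_3, cv_7_4, cv_7_5, cv_7_6, cv_8_0, cv_8_1, cv_8_2, cv_8_3, cv_8_4, cv_8_5, cv_8_6, cv_8_7, cv_9_0, cv_9_1, cv_9_2, cv_9_3, cv_9_4, cv_9_5, cv_9_6, cv_9_7, cv_9_8] <;> ring_nf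


section Aux

attribute [local instance] Matrix.linftyOpNormedAddCommGroup Matrix.linftyOpNormedRing
  Matrix.linftyOpNormedSpace

local notation "M9" => Matrix (Fin 9) (Fin 9) ℝ

/-- General convergence lemma: a product of factors `Q + E n` with `Q` idempotent and
summable error norms converges. -/
lemma key_conv (Q : M9) (hQ : Q * Q = Q) (E : ℕ → M9) (hE : Summable fun n => ‖E n‖)
    (P : ℕ → M9) (hP0 : P 0 = 1) (hPs : ∀ n, P (n + 1) = P n * (Q + E n)) :
    ∃ L : M9, Tendsto P atTop (nhds L) ∧ L * Q = L := by
  set c : ℕ → ℝ := fun n => ‖E n‖ with hc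
  have hc0 : ∀ n, 0 ≤ c n := fun n => norm_nonneg _
  set K : ℝ := ‖Q‖ + 1 with hKdef
  have hK1 : 1 ≤ K := by have := norm_nonneg Q; rw [hKdef]; linarith
  set S : ℝ := ∑' n, c n with hS
  have hpart : ∀ n, ∑ j ∈ Finset.range n, c j ≤ S :=
    fun n => Summable.sum_le_tsum _ (fun i _ => hc0 i) hE
  set m : ℕ → ℝ := fun n => max ‖P n‖ ‖P n * Q‖ with hm
  have hm0 : ∀ n, 0 ≤ m n := fun n => le_trans (norm_nonneg _) (le_max_left _ _)
  have hPQ : ∀ n, P (n + 1) * Q = P n * Q + P n * E n * Q := by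
    intro n
    rw [hPs n, mul_add, add_mul, mul_assoc (P n) Q Q, hQ]
  have hstep : ∀ n, m (n + 1) ≤ m n * (1 + K * c n) := by
    intro n
    have hPn : ‖P n‖ ≤ m n := le_max_left _ _
    have hPnQ : ‖P n * Q‖ ≤ m n := le_max_right _ _
    have hmc : ‖P n‖ * c n ≤ m n * c n := mul_le_mul_of_nonneg_right hPn (hc0 n)
    have hmcK : m n * c n * ‖Q‖ ≤ m n * c n * K := by
      apply mul_le_mul_of_nonneg_left _ (mul_nonneg (hm0 n) (hc0 n))
      rw [hKdef]; linarith
    have hcK : m n * c n ≤ m n * (K * c n) := by nlinarith [mul_nonneg (mul_nonneg (hm0 n) (hc0 n)) (sub_nonneg.mpr hK1)]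
    have h1 : ‖P (n + 1)‖ ≤ m n * (1 + K * c n) := by
      rw [hPs n, mul_add]
      calc ‖P n * Q + P n * E n‖ ≤ ‖P n * Q‖ + ‖P n * E n‖ := norm_add_le _ _
        _ ≤ m n + ‖P n‖ * c n := by have := norm_mul_le (P n) (E n); linarith
        _ ≤ m n + m n * (K * c n) := by linarith
        _ = m n * (1 + K * c n) := by ring
    have h2 : ‖P (n + 1) * Q‖ ≤ m n * (1 + K * c n) := by
      rw [hPQ n]
      have h3 : ‖P n * E n * Q‖ ≤ ‖P n‖ * c n * ‖Q‖ := by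
        calc ‖P n * E n * Q‖ ≤ ‖P n * E n‖ * ‖Q‖ := norm_mul_le _ _
          _ ≤ ‖P n‖ * c n * ‖Q‖ :=
              mul_le_mul_of_nonneg_right (norm_mul_le (P n) (E n)) (norm_nonneg Q)
      have h4 : ‖P n‖ * c n * ‖Q‖ ≤ m n * c n * ‖Q‖ :=
        mul_le_mul_of_nonneg_right hmc (norm_nonneg Q)
      calc ‖P n * Q + P n * E n * Q‖ ≤ ‖P n * Q‖ + ‖P n * E n * Q‖ := norm_add_le _ _
        _ ≤ m n + m n * c n * K := by linarith
        _ = m n * (1 + K * c n) := by ring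
    exact max_le h1 h2
  have hbound : ∀ n, m n ≤ m 0 * Real.exp (K * ∑ j ∈ Finset.range n, c j) := by
    intro n
    induction n with
    | zero => simp
    | succ n ih =>
        have h1 : 1 + K * c n ≤ Real.exp (K * c n) := by
          have := Real.add_one_le_exp (K * c n); linarith
        calc m (n + 1) ≤ m n * (1 + K * c n) := hstep n
          _ ≤ (m 0 * Real.exp (K * ∑ j ∈ Finset.range n, c j)) * Real.exp (K * c n) := by
              apply mul_le_mul ih h1 _ _
              · nlinarith [hc0 n]
              · positivity
          _ = m 0 * Real.exp (K * ∑ j ∈ Finset.range (n + 1), c j) := by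
              rw [mul_assoc, ← Real.exp_add, Finset.sum_range_succ, mul_add]
  set Mb : ℝ := m 0 * Real.exp (K * S) with hMb
  have hMbound : ∀ n, m n ≤ Mb := by
    intro n
    refine (hbound n).trans ?_
    apply mul_le_mul_of_nonneg_left _ (hm0 0)
    apply Real.exp_le_exp.mpr
    have hK0 : 0 ≤ K := by linarith
    exact mul_le_mul_of_nonneg_left (hpart n) hK0
  have hMb0 : 0 ≤ Mb := le_trans (hm0 0) (hMbound 0)
  have hPbound : ∀ n, ‖P n‖ ≤ Mb := fun n => le_trans (le_max_left _ _) (hMbound n)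
  -- the sequence B n = P n * Q is Cauchy
  set B : ℕ → M9 := fun n => P n * Q with hB
  have hdist : ∀ n, dist (B n) (B (n + 1)) ≤ Mb * ‖Q‖ * c n := by
    intro n
    rw [dist_eq_norm, hB]
    simp only
    rw [hPQ n]
    have h1 : P n * Q - (P n * Q + P n * E n * Q) = -(P n * E n * Q) := by abel
    rw [h1, norm_neg]
    calc ‖P n * E n * Q‖ ≤ ‖P n * E n‖ * ‖Q‖ := norm_mul_le _ _
      _ ≤ (‖P n‖ * c n) * ‖Q‖ :=
          mul_le_mul_of_nonneg_right (norm_mul_le (P n) (E n)) (norm_nonneg Q)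
      _ ≤ (Mb * c n) * ‖Q‖ :=
          mul_le_mul_of_nonneg_right
            (mul_le_mul_of_nonneg_right (hPbound n) (hc0 n)) (norm_nonneg Q)
      _ = Mb * ‖Q‖ * c n := by ring
  have hsumd : Summable fun n => dist (B n) (B (n + 1)) := by
    apply Summable.of_nonneg_of_le (fun n => dist_nonneg) hdist
    simpa [mul_comm] using hE.mul_left (Mb * ‖Q‖)
  have hcauchy : CauchySeq B := cauchySeq_of_summable_dist hsumd
  obtain ⟨L, hL⟩ := cauchySeq_tendsto_of_complete hcauchy
  -- P n * E n → 0
  have hPE : Tendsto (fun n => P n * E n) atTop (nhds 0) := by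
    have hle : ∀ n, ‖P n * E n‖ ≤ Mb * c n := by
      intro n
      calc ‖P n * E n‖ ≤ ‖P n‖ * c n := norm_mul_le _ _
        _ ≤ Mb * c n := mul_le_mul_of_nonneg_right (hPbound n) (hc0 n)
    have h0 : Tendsto c atTop (nhds 0) := hE.tendsto_atTop_zero
    exact squeeze_zero_norm hle (by simpa using h0.const_mul Mb)
  have hPsucc : Tendsto (fun n => P (n + 1)) atTop (nhds (L + 0)) := by
    have hEq : (fun n => P (n + 1)) = fun n => B n + P n * E n := by
      funext n; rw [hPs n, mul_add]
    rw [hEq]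
    exact hL.add hPE
  have hPlim : Tendsto P atTop (nhds L) := by
    rw [← tendsto_add_atTop_iff_nat 1]
    simpa using hPsucc
  refine ⟨L, hPlim, ?_⟩
  have hLQ : Tendsto B atTop (nhds (L * Q)) := hPlim.mul tendsto_const_nhds
  exact (tendsto_nhds_unique hLQ hL)


theorem stmt17 (k : ℕ → ℕ) (hk : ∀ i, 1 ≤ k i)
    (hsum : Summable fun i => 1 / (k i : ℝ)) :
    ∃ Rt : Matrix (Fin 9) (Fin 9) ℝ,
      Tendsto (fun i => partialProd k (2 * i)) atTop (nhds Rt) ∧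
        Rt * (Rprime * Rprime) = Rt := by
  classical
  set N : Matrix (Fin 9) (Fin 9) ℝ := Rmat 0 with hN
  have hdecomp : ∀ j : ℕ, Rmat j = (j : ℝ) • Rprime + N := fun j => Rmat_decomp j
  set Q : Matrix (Fin 9) (Fin 9) ℝ := Rprime * Rprime with hQdef
  have hQ : Q * Q = Q := by
    rw [hQdef, Rprime_sq, Qmat_idem]
  set eps : ℕ → ℝ := fun n => ((k n : ℝ))⁻¹ with heps
  have hkpos : ∀ n, (0 : ℝ) < (k n : ℝ) := by
    intro n; exact_mod_cast Nat.lt_of_lt_of_le Nat.zero_lt_one (hk n)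
  have heps0 : ∀ n, 0 ≤ eps n := fun n => inv_nonneg.mpr (hkpos n).le
  have heps1 : ∀ n, eps n ≤ 1 := by
    intro n
    rw [heps]
    simp only
    rw [inv_le_one_iff₀]
    right
    exact_mod_cast hk n
  set F : ℕ → Matrix (Fin 9) (Fin 9) ℝ := fun n => ((k n : ℝ))⁻¹ • Rmat (k n) with hF
  have hFeq : ∀ n, F n = Rprime + eps n • N := by
    intro n
    rw [hF]
    simp only
    rw [hdecomp (k n), smul_add, smul_smul, inv_mul_cancel₀ (hkpos n).ne', one_smul]
  set E : ℕ → Matrix (Fin 9) (Fin 9) ℝ := fun i =>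
    eps (2 * i + 1) • (Rprime * N) + eps (2 * i) • (N * Rprime) +
      (eps (2 * i) * eps (2 * i + 1)) • (N * N) with hE
  have hFF : ∀ i, F (2 * i) * F (2 * i + 1) = Q + E i := by
    intro i
    rw [hFeq, hFeq, hE, hQdef]
    simp only [mul_add, add_mul, smul_mul_assoc, mul_smul_comm, smul_smul, smul_add]
    rw [mul_comm (eps (2 * i + 1)) (eps (2 * i))]
    abel
  have hPs : ∀ i, partialProd k (2 * (i + 1)) = partialProd k (2 * i) * (Q + E i) := by
    intro i
    have hPP : ∀ n, partialProd k (n + 1) = partialProd k n * F n := fun n => rfl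
    have h2 : 2 * (i + 1) = (2 * i + 1) + 1 := by ring
    rw [h2, hPP, hPP, mul_assoc, hFF]
  -- summability of the error norms
  have hsum' : Summable eps := by simpa [heps, one_div] using hsum
  have he : Summable (fun i => eps (2 * i)) :=
    hsum'.comp_injective (fun a b h => by omega)
  have ho : Summable (fun i => eps (2 * i + 1)) :=
    hsum'.comp_injective (fun a b h => by omega)
  set C : ℝ := ‖Rprime * N‖ + ‖N * Rprime‖ + ‖N * N‖ with hC
  have hEle : ∀ i, ‖E i‖ ≤ (eps (2 * i) + eps (2 * i + 1)) * C := by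
    intro i
    have e1 : ‖eps (2 * i + 1) • (Rprime * N)‖ = eps (2 * i + 1) * ‖Rprime * N‖ := by
      rw [norm_smul, Real.norm_eq_abs, abs_of_nonneg (heps0 _)]
    have e2 : ‖eps (2 * i) • (N * Rprime)‖ = eps (2 * i) * ‖N * Rprime‖ := by
      rw [norm_smul, Real.norm_eq_abs, abs_of_nonneg (heps0 _)]
    have e3 : ‖(eps (2 * i) * eps (2 * i + 1)) • (N * N)‖
        = (eps (2 * i) * eps (2 * i + 1)) * ‖N * N‖ := by
      rw [norm_smul, Real.norm_eq_abs, abs_of_nonneg (mul_nonneg (heps0 _) (heps0 _))]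
    have h4 : ‖E i‖ ≤ eps (2 * i + 1) * ‖Rprime * N‖ + eps (2 * i) * ‖N * Rprime‖
        + (eps (2 * i) * eps (2 * i + 1)) * ‖N * N‖ := by
      rw [hE]
      calc ‖eps (2 * i + 1) • (Rprime * N) + eps (2 * i) • (N * Rprime)
            + (eps (2 * i) * eps (2 * i + 1)) • (N * N)‖
          ≤ ‖eps (2 * i + 1) • (Rprime * N) + eps (2 * i) • (N * Rprime)‖
            + ‖(eps (2 * i) * eps (2 * i + 1)) • (N * N)‖ := norm_add_le _ _
        _ ≤ ‖eps (2 * i + 1) • (Rprime * N)‖ + ‖eps (2 * i) • (N * Rprime)‖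
            + ‖(eps (2 * i) * eps (2 * i + 1)) • (N * N)‖ := by
              have := norm_add_le (eps (2 * i + 1) • (Rprime * N)) (eps (2 * i) • (N * Rprime))
              linarith
        _ = _ := by rw [e1, e2, e3]
    have hn1 : (0:ℝ) ≤ ‖Rprime * N‖ := norm_nonneg _
    have hn2 : (0:ℝ) ≤ ‖N * Rprime‖ := norm_nonneg _
    have hn3 : (0:ℝ) ≤ ‖N * N‖ := norm_nonneg _
    rw [hC]
    nlinarith [heps0 (2*i), heps0 (2*i+1), heps1 (2*i), heps1 (2*i+1),
      mul_nonneg (heps0 (2*i)) hn3, mul_nonneg (heps0 (2*i+1)) hn1,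
      mul_nonneg (heps0 (2*i)) hn2]
  have hEsum : Summable (fun i => ‖E i‖) := by
    apply Summable.of_nonneg_of_le (fun i => norm_nonneg _) hEle
    exact (he.add ho).mul_right C
  obtain ⟨L, hL, hLQ⟩ := key_conv Q hQ E hEsum (fun i => partialProd k (2 * i)) rfl hPs
  exact ⟨L, hL, hLQ⟩

end Aux
end
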